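/- Let α* ∈ F_e be a local minimizer of Φ on F_e (i.e., there is a neighborhood N of α* such that Φ(α*) ≤ Φ(α) for all α ∈ N ∩ F_e). If there exists l ∈ {0,…,L} such that α*_l ≠ 0 and (Ŷα* − α°)_l ≠ 0, then α* is a scaled KKT point of the constrained problem: there exists ν ≥ 0 such that p·β_l·‖α*_l‖^p·α*_l + 2ν·‖α*_l‖²·(Ŷα* − α°)_l = 0 for every l ∈ {0,…,L}, ν·g(α*) = 0, and g(α*) ≤ 0. -/

import Mathlib

/-!
The constraint is active at `α*`: otherwise `α*` would be an unconstrained local minimiser,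
whereas `Φ (t • α*) = t ^ p * Φ α* < Φ α*` for `t < 1`. As `Φ` is not differentiable where a
group vanishes, perturb `α*` only along directions `D h` with `(D h)_l = ‖α*_l‖² h_l`: along
them `Φ` has derivative `Re⟪W, h⟫` with `W_l = p β_l ‖α*_l‖^p α*_l`, and `g` has derivative
`2 Re⟪D r, h⟫` with `r = Ŷα* - α°`. Local minimality gives `Re⟪W, h⟫ ≥ 0` whenever
`Re⟪D r, h⟫ < 0`, and `D r ≠ 0` by the hypothesis on the group `l`, so a one-constraint Farkas
argument yields `W = -2ν • D r` with `ν ≥ 0`: the scaled KKT system.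
-/

/-- `V L = ∏_{l=0}^{L} ℂ^{2l+1}` as a complex inner product space. -/
abbrev V (L : ℕ) := PiLp 2 (fun l : Fin (L + 1) => EuclideanSpace ℂ (Fin (2 * (l : ℕ) + 1)))

open Filter Topology

section InnerProduct

variable {F : Type*} [NormedAddCommGroup F] [InnerProductSpace ℂ F]

theorem re_inner_real_smul_left (x y : F) (t : ℝ) :
    (inner ℂ (t • x) y).re = t * (inner ℂ x y).re := by
  simp

theorem re_inner_real_smul_right (x y : F) (t : ℝ) :
    (inner ℂ x (t • y)).re = t * (inner ℂ x y).re := by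
  simp

theorem re_inner_self (x : F) : (inner ℂ x x).re = ‖x‖ ^ 2 :=
  inner_self_eq_norm_sq (𝕜 := ℂ) x

theorem re_inner_comm (x y : F) : (inner ℂ x y).re = (inner ℂ y x).re :=
  inner_re_symm (𝕜 := ℂ) x y

theorem exists_nonpos_smul_eq_of_re_inner_neg {u v : F} (hv : v ≠ 0)
    (h : ∀ w, (inner ℂ v w).re < 0 → 0 ≤ (inner ℂ u w).re) :
    ∃ μ : ℝ, μ ≤ 0 ∧ u = μ • v := by
  have hv2 : 0 < ‖v‖ ^ 2 := by positivity
  have hweak : ∀ w, (inner ℂ v w).re ≤ 0 → 0 ≤ (inner ℂ u w).re := by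
    intro w hw
    have hlim : Tendsto (fun ε : ℝ => (inner ℂ u (w - ε • v)).re) (𝓝[>] 0)
        (𝓝 (inner ℂ u w).re) :=
      (Continuous.tendsto' (by fun_prop) 0 _ (by simp)).mono_left nhdsWithin_le_nhds
    refine ge_of_tendsto hlim (eventually_nhdsWithin_of_forall fun ε (hε : 0 < ε) => h _ ?_)
    rw [inner_sub_right, Complex.sub_re, re_inner_real_smul_right, re_inner_self]
    nlinarith
  set μ : ℝ := (inner ℂ u v).re / ‖v‖ ^ 2
  have horth : (inner ℂ v (u - μ • v)).re = 0 := by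
    rw [inner_sub_right, Complex.sub_re, re_inner_real_smul_right, re_inner_self,
      re_inner_comm, div_mul_cancel₀ _ hv2.ne', sub_self]
  have hres : u - μ • v = 0 := by
    have hnonpos := hweak _ (by rw [inner_neg_right, Complex.neg_re, horth, neg_zero])
    have hsq : ‖u - μ • v‖ ^ 2 = (inner ℂ u (u - μ • v)).re := by
      rw [← re_inner_self, inner_sub_left, Complex.sub_re, re_inner_real_smul_left, horth,
        mul_zero, sub_zero]
    rw [inner_neg_right, Complex.neg_re, ← hsq] at hnonpos
    exact norm_eq_zero.mp <| pow_eq_zero_iff two_ne_zero |>.mp <|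
      le_antisymm (by linarith) (sq_nonneg _)
  have hμ : μ ≤ 0 := by
    have := hweak (-v) (by rw [inner_neg_right, Complex.neg_re, re_inner_self]; linarith)
    rw [inner_neg_right, Complex.neg_re] at this
    exact div_nonpos_of_nonpos_of_nonneg (by linarith) hv2.le
  exact ⟨μ, hμ, sub_eq_zero.mp hres⟩

theorem hasDerivAt_add_smul (x h : F) : HasDerivAt (fun t : ℝ => x + t • h) h 0 := by
  simpa using ((hasDerivAt_id (0 : ℝ)).smul_const h).const_add x

theorem HasDerivAt.re {f : ℝ → ℂ} {f' : ℂ} {t : ℝ} (hf : HasDerivAt f f' t) :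
    HasDerivAt (fun s => (f s).re) f'.re t := by
  simpa only [Function.comp_def, Complex.reCLM_apply] using
    Complex.reCLM.hasFDerivAt.comp_hasDerivAt t hf

theorem hasDerivAt_re_inner_add_smul (a x h : F) :
    HasDerivAt (fun t : ℝ => (inner ℂ a (x + t • h)).re) (inner ℂ a h).re 0 := by
  simpa only [inner_zero_left, add_zero] using
    ((hasDerivAt_const (0 : ℝ) a).inner ℂ (hasDerivAt_add_smul x h)).re

theorem LinearMap.IsSymmetric.hasDerivAt_re_inner_apply_add_smul {Y : F →ₗ[ℂ] F}
    (hY : Y.IsSymmetric) (x h : F) :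
    HasDerivAt (fun t : ℝ => (inner ℂ (x + t • h) (Y (x + t • h))).re)
      (2 * (inner ℂ (Y x) h).re) 0 := by
  have hline := hasDerivAt_add_smul x h
  have hYline : HasDerivAt (fun t : ℝ => Y (x + t • h)) (Y h) 0 := by
    simpa using hasDerivAt_add_smul (Y x) (Y h)
  refine (hline.inner ℂ hYline).re.congr_deriv ?_
  simp only [zero_smul, add_zero, Complex.add_re, ← hY x h, re_inner_comm h]
  ring

theorem LinearMap.IsSymmetric.hasDerivAt_quadratic_add_smul {Y : F →ₗ[ℂ] F}
    (hY : Y.IsSymmetric) (a x h : F) (k : ℝ) :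
    HasDerivAt (fun t : ℝ =>
        (inner ℂ (x + t • h) (Y (x + t • h))).re - 2 * (inner ℂ a (x + t • h)).re + k)
      (2 * (inner ℂ (Y x - a) h).re) 0 := by
  refine (((hY.hasDerivAt_re_inner_apply_add_smul x h).sub
    ((hasDerivAt_re_inner_add_smul a x h).const_mul 2)).add_const k).congr_deriv ?_
  rw [inner_sub_left, Complex.sub_re]
  ring

theorem hasDerivAt_norm_add_smul_sq (x h : F) :
    HasDerivAt (fun t : ℝ => ‖x + t • h‖ ^ 2) (2 * (inner ℂ x h).re) 0 := by
  simpa [← Complex.ofReal_pow] using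
    LinearMap.IsSymmetric.id.hasDerivAt_re_inner_apply_add_smul x h

theorem hasDerivAt_norm_add_smul_rpow {x : F} (hx : x ≠ 0) (h : F) (p : ℝ) :
    HasDerivAt (fun t : ℝ => ‖x + t • h‖ ^ p) (p * ‖x‖ ^ (p - 2) * (inner ℂ x h).re) 0 := by
  have hsq := (hasDerivAt_norm_add_smul_sq x h).rpow_const (p := p / 2)
    (Or.inl (by simpa using hx))
  have hpow : ∀ r : ℝ, 0 ≤ r → (r ^ 2) ^ (p / 2) = r ^ p := fun r hr => by
    rw [← Real.rpow_natCast, ← Real.rpow_mul hr]; ring_nf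
  convert hsq using 1
  · funext t; rw [hpow _ (norm_nonneg _)]
  · simp only [zero_smul, add_zero]
    rw [← Real.rpow_natCast, ← Real.rpow_mul (norm_nonneg _)]
    ring_nf

theorem hasDerivAt_norm_add_smul_normSq_smul_rpow (x y : F) (p : ℝ) :
    HasDerivAt (fun t : ℝ => ‖x + t • (‖x‖ ^ 2 • y)‖ ^ p) (p * ‖x‖ ^ p * (inner ℂ x y).re) 0 := by
  rcases eq_or_ne x 0 with rfl | hx
  · simpa using hasDerivAt_const (0 : ℝ) ((0 : ℝ) ^ p)
  refine (hasDerivAt_norm_add_smul_rpow hx _ p).congr_deriv ?_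
  rw [re_inner_real_smul_right, ← Real.rpow_natCast, Nat.cast_ofNat]
  have : ‖x‖ ^ (p - 2) * ‖x‖ ^ (2 : ℝ) = ‖x‖ ^ p := by
    rw [← Real.rpow_add (norm_pos_iff.mpr hx), sub_add_cancel]
  linear_combination p * (inner ℂ x y).re * this

end InnerProduct

section GroupPenalty

variable {ι : Type*} [Fintype ι] {E : ι → Type*} [∀ i, NormedAddCommGroup (E i)]

noncomputable def groupPenalty (β : ι → ℝ) (p : ℝ) (x : PiLp 2 E) : ℝ :=
  ∑ i, β i * ‖x i‖ ^ p

theorem groupPenalty_smul [∀ i, NormedSpace ℝ (E i)] (β : ι → ℝ) (p : ℝ) (x : PiLp 2 E) {t : ℝ}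
    (ht : 0 ≤ t) : groupPenalty β p (t • x) = t ^ p * groupPenalty β p x := by
  simp only [groupPenalty, Finset.mul_sum, PiLp.smul_apply, norm_smul, Real.norm_of_nonneg ht,
    Real.mul_rpow ht (norm_nonneg _)]
  exact Finset.sum_congr rfl fun i _ => by ring

theorem groupPenalty_pos {β : ι → ℝ} (hβ : ∀ i, 0 < β i) (p : ℝ) {x : PiLp 2 E} {i : ι}
    (hx : x i ≠ 0) : 0 < groupPenalty β p x :=
  Finset.sum_pos' (fun j _ => mul_nonneg (hβ j).le (by positivity))
    ⟨i, Finset.mem_univ i, mul_pos (hβ i) (Real.rpow_pos_of_pos (norm_pos_iff.mpr hx) p)⟩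

variable [∀ i, InnerProductSpace ℂ (E i)]

noncomputable def groupScale (w : ι → ℝ) (x : PiLp 2 E) : PiLp 2 E :=
  WithLp.toLp 2 fun i => w i • x i

noncomputable def scaledGradient (β : ι → ℝ) (p : ℝ) (x : PiLp 2 E) : PiLp 2 E :=
  WithLp.toLp 2 fun i => (p * β i * ‖x i‖ ^ p) • x i

theorem inner_groupScale_right (w : ι → ℝ) (x y : PiLp 2 E) :
    inner ℂ x (groupScale w y) = inner ℂ (groupScale w x) y := by
  simp only [groupScale, PiLp.inner_apply]
  refine Finset.sum_congr rfl fun i _ => ?_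
  rw [← Complex.coe_smul, ← Complex.coe_smul, inner_smul_left, inner_smul_right,
    Complex.conj_ofReal]

theorem hasDerivAt_groupPenalty_add_smul_groupScale (β : ι → ℝ) (p : ℝ) (x h : PiLp 2 E) :
    HasDerivAt (fun t : ℝ => groupPenalty β p (x + t • groupScale (‖x ·‖ ^ 2) h))
      (inner ℂ (scaledGradient β p x) h).re 0 := by
  simp only [groupPenalty, groupScale, scaledGradient, PiLp.add_apply, PiLp.smul_apply,
    PiLp.inner_apply, Complex.re_sum, re_inner_real_smul_left]
  refine HasDerivAt.fun_sum fun i _ => ?_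
  exact ((hasDerivAt_norm_add_smul_normSq_smul_rpow (x i) (h i) p).const_mul (β i)).congr_deriv
    (by ring)

end GroupPenalty

section LocalMinimum

variable {E : Type*} [TopologicalSpace E] [AddCommGroup E] [Module ℝ E] [ContinuousSMul ℝ E]

theorem not_isLocalMin_of_rpow_homogeneous {f : E → ℝ} {x : E} {p : ℝ} (hp : 0 < p)
    (hf : ∀ t : ℝ, 0 ≤ t → f (t • x) = t ^ p * f x) (hx : 0 < f x) : ¬ IsLocalMin f x := by
  intro hmin
  have hray : Tendsto (fun t : ℝ => t • x) (𝓝[<] 1) (𝓝 x) :=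
    (Continuous.tendsto' (by fun_prop) 1 x (one_smul ℝ x)).mono_left nhdsWithin_le_nhds
  obtain ⟨t, hle, ht0, ht1⟩ :=
    ((hray.eventually hmin).and (Ioo_mem_nhdsLT zero_lt_one)).exists
  rw [hf t ht0.le] at hle
  nlinarith [Real.rpow_lt_one ht0.le ht1 hp]

theorem IsLocalMinOn.eq_zero_of_rpow_homogeneous {f g : E → ℝ} {x : E} {p : ℝ}
    (hmin : IsLocalMinOn f {y | g y ≤ 0} x) (hp : 0 < p)
    (hf : ∀ t : ℝ, 0 ≤ t → f (t • x) = t ^ p * f x) (hx : 0 < f x) (hg : ContinuousAt g x)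
    (hgx : g x ≤ 0) : g x = 0 :=
  hgx.eq_or_lt.resolve_right fun hlt => not_isLocalMin_of_rpow_homogeneous hp hf hx <|
    hmin.isLocalMin <| (hg.eventually_lt continuousAt_const hlt).mono fun _ hy => hy.le

variable [ContinuousAdd E]

theorem IsLocalMinOn.hasDerivAt_line_nonneg_of_constraint {f g : E → ℝ} {x h : E} {a b : ℝ}
    (hmin : IsLocalMinOn f {y | g y ≤ 0} x) (hgx : g x = 0)
    (hf : HasDerivAt (fun t : ℝ => f (x + t • h)) a 0)
    (hg : HasDerivAt (fun t : ℝ => g (x + t • h)) b 0) (hb : b < 0) : 0 ≤ a := by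
  have hdesc : ∀ᶠ t in 𝓝[>] (0 : ℝ), g (x + t • h) ≤ 0 := by
    filter_upwards [hg.tendsto_slope_zero_right.eventually (eventually_lt_nhds hb),
      self_mem_nhdsWithin] with t hslope (ht : 0 < t)
    simp only [zero_add, zero_smul, add_zero, hgx, sub_zero, smul_eq_mul] at hslope
    exact (neg_of_mul_neg_right hslope (inv_nonneg.mpr ht.le)).le
  have hline : Tendsto (fun t : ℝ => x + t • h) (𝓝[>] 0) (𝓝[{y | g y ≤ 0}] x) := by
    refine tendsto_nhdsWithin_iff.mpr ⟨?_, hdesc⟩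
    exact (Continuous.tendsto' (by fun_prop) 0 x (by simp)).mono_left nhdsWithin_le_nhds
  refine ge_of_tendsto hf.tendsto_slope_zero_right ?_
  filter_upwards [hline.eventually hmin, self_mem_nhdsWithin] with t hle (ht : 0 < t)
  simp only [zero_add, zero_smul, add_zero, smul_eq_mul]
  exact mul_nonneg (inv_nonneg.mpr ht.le) (sub_nonneg.mpr hle)

end LocalMinimum

theorem stmt6_general (L : ℕ) (p : ℝ) (hp0 : 0 < p)
    (β : Fin (L + 1) → ℝ) (hβ : ∀ l, 0 < β l)
    (Φ : V L → ℝ)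
    (hΦ : ∀ α : V L, Φ α = ∑ l : Fin (L + 1), β l * ‖α l‖ ^ p)
    (Yh : V L →ₗ[ℂ] V L)
    (hsa : ∀ x y : V L, (inner ℂ (Yh x) y : ℂ) = inner ℂ x (Yh y))
    (αo : V L) (c ϱ : ℝ)
    (g : V L → ℝ)
    (hg : ∀ α : V L, g α = (inner ℂ α (Yh α) : ℂ).re - 2 * (inner ℂ αo α : ℂ).re + c - ϱ)
    (αs : V L) (hfeas : g αs ≤ 0)
    (hloc : ∃ N ∈ nhds αs, ∀ α ∈ N, g α ≤ 0 → Φ αs ≤ Φ α)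
    (hnz : ∃ l : Fin (L + 1), αs l ≠ 0 ∧ (Yh αs - αo) l ≠ 0) :
    ∃ ν : ℝ, 0 ≤ ν ∧
      (∀ l : Fin (L + 1),
        (p * β l * ‖αs l‖ ^ p) • αs l
          + (2 * ν * ‖αs l‖ ^ 2) • ((Yh αs - αo) l) = 0) ∧
      ν * g αs = 0 ∧ g αs ≤ 0 := by
  obtain rfl : Φ = groupPenalty β p := funext hΦ
  obtain ⟨l₀, hαl₀, hrl₀⟩ := hnz
  have hmin : IsLocalMinOn (groupPenalty β p) {α | g α ≤ 0} αs := by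
    obtain ⟨N, hN, hNmin⟩ := hloc
    exact eventually_nhdsWithin_iff.mpr (Filter.mem_of_superset hN hNmin)
  have hgc : Continuous g := by
    have : Continuous Yh := Yh.continuous_of_finiteDimensional
    rw [funext hg]; fun_prop
  have hact : g αs = 0 := hmin.eq_zero_of_rpow_homogeneous hp0
    (fun t ht => groupPenalty_smul β p αs ht) (groupPenalty_pos hβ p hαl₀) hgc.continuousAt hfeas
  have hgline (d : V L) : HasDerivAt (fun t : ℝ => g (αs + t • d))
      (2 * (inner ℂ (Yh αs - αo) d).re) 0 :=
    (LinearMap.IsSymmetric.hasDerivAt_quadratic_add_smul hsa αo αs d (c - ϱ)).congr_of_eventuallyEq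
      (.of_forall fun t => (hg _).trans (add_sub_assoc ..))
  set D : V L → V L := groupScale (‖αs ·‖ ^ 2)
  have hFO : ∀ h, (inner ℂ (D (Yh αs - αo)) h).re < 0 →
      0 ≤ (inner ℂ (scaledGradient β p αs) h).re := fun h hh =>
    hmin.hasDerivAt_line_nonneg_of_constraint hact
      (hasDerivAt_groupPenalty_add_smul_groupScale β p αs h) (hgline (D h))
      (by rw [← inner_groupScale_right] at hh; linarith)
  obtain ⟨μ, hμ, hgrad⟩ := exists_nonpos_smul_eq_of_re_inner_neg
    (fun h0 => smul_ne_zero (by positivity) hrl₀ (congrArg (· l₀) h0 : _)) hFO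
  refine ⟨-μ / 2, by linarith, fun l => ?_, by rw [hact, mul_zero], hfeas⟩
  have hl := congrArg (· l) hgrad
  simp only [scaledGradient, D, groupScale, PiLp.smul_apply] at hl
  rw [hl]
  module

/-- a local minimizer of `Φ` on the feasible set at which some group is nonzero
and has nonzero residual is a scaled KKT point of the constrained problem. -/
theorem stmt6 (L : ℕ) (p : ℝ) (hp0 : 0 < p) (hp1 : p < 1)
    (β : Fin (L + 1) → ℝ) (hβ : ∀ l, 0 < β l)
    (Φ : V L → ℝ)
    (hΦ : ∀ α : V L, Φ α = ∑ l : Fin (L + 1), β l * ‖α l‖ ^ p)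
    (Yh : V L →ₗ[ℂ] V L)
    (hsa : ∀ x y : V L, (inner ℂ (Yh x) y : ℂ) = inner ℂ x (Yh y))
    (hpd : ∀ α : V L, α ≠ 0 → 0 < (inner ℂ α (Yh α) : ℂ).re)
    (αo : V L) (c ϱ : ℝ)
    (g : V L → ℝ)
    (hg : ∀ α : V L, g α = (inner ℂ α (Yh α) : ℂ).re - 2 * (inner ℂ αo α : ℂ).re + c - ϱ)
    (αs : V L) (hfeas : g αs ≤ 0)
    (hloc : ∃ N ∈ nhds αs, ∀ α ∈ N, g α ≤ 0 → Φ αs ≤ Φ α)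
    (hnz : ∃ l : Fin (L + 1), αs l ≠ 0 ∧ (Yh αs - αo) l ≠ 0) :
    ∃ ν : ℝ, 0 ≤ ν ∧
      (∀ l : Fin (L + 1),
        (p * β l * ‖αs l‖ ^ p) • αs l
          + (2 * ν * ‖αs l‖ ^ 2) • ((Yh αs - αo) l) = 0) ∧
      ν * g αs = 0 ∧ g αs ≤ 0 :=
  stmt6_general L p hp0 β hβ Φ hΦ Yh hsa αo c ϱ g hg αs hfeas hloc hnz
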